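/- arXiv:2411.11402 — 6 statements merged into one kernel-verified Lean document; each statement's English description precedes it below -/
import Mathlib

section
/- Let a > 0, τ ≠ 0, b ∈ ℝ, C ∈ ℝ. Then the function X(t) = C · Σ_{n=0}^∞ (1/n!) (b/(aτ))^n exp(-a(t - nτ)²/2) satisfies the delay differential equation X'(t) + a·t·X(t) = b·X(t - τ) for all t ∈ ℝ. -/
/-! With `c = b/(aτ)` and `gₙ(t) = cⁿ/n! · exp(-a (t - nτ)²/2)`, each term satisfies
`gₙ' + a t gₙ = aτ n gₙ`, and `n gₙ(t) = c gₙ₋₁(t - τ)`. Summing, `S = ∑ gₙ` satisfies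
`S' + a t S = aτ c S(t - τ) = b S(t - τ)`. Termwise differentiation is legitimate because
`|a x| exp(-a x²/2) ≤ √a`, so the derivatives are dominated by the summable `√a |c|ⁿ/n!`. -/

open Real

lemma mul_exp_neg_sq_div_two_le_one (u : ℝ) : u * exp (-(u ^ 2 / 2)) ≤ 1 := by
  have hu : u ≤ exp (u ^ 2 / 2) := by nlinarith [add_one_le_exp (u ^ 2 / 2), sq_nonneg (u - 1)]
  calc u * exp (-(u ^ 2 / 2)) ≤ exp (u ^ 2 / 2) * exp (-(u ^ 2 / 2)) := by gcongr
    _ = 1 := by rw [← exp_add, add_neg_cancel, exp_zero]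

lemma abs_mul_mul_exp_neg_mul_sq_div_two_le_sqrt {a : ℝ} (ha : 0 ≤ a) (x : ℝ) :
    |a * x| * exp (-a * x ^ 2 / 2) ≤ √a := by
  have hsq : (√a * |x|) ^ 2 = a * x ^ 2 := by rw [mul_pow, sq_sqrt ha, sq_abs]
  have habs : |a * x| = √a * (√a * |x|) := by
    rw [abs_mul, abs_of_nonneg ha, ← mul_assoc, mul_self_sqrt ha]
  rw [habs, show -a * x ^ 2 / 2 = -((√a * |x|) ^ 2 / 2) by rw [hsq]; ring, mul_assoc]
  exact mul_le_of_le_one_right (sqrt_nonneg a) (mul_exp_neg_sq_div_two_le_one _)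

namespace GaussianChain

variable (a τ c : ℝ)

noncomputable def term (n : ℕ) (t : ℝ) : ℝ :=
  c ^ n / n.factorial * exp (-a * (t - n * τ) ^ 2 / 2)

lemma hasDerivAt_term (n : ℕ) (t : ℝ) :
    HasDerivAt (term a τ c n) (-a * (t - n * τ) * term a τ c n t) t := by
  have h : HasDerivAt (fun s ↦ -a * (s - n * τ) ^ 2 / 2) (-a * (t - n * τ)) t := by
    refine ((((hasDerivAt_id' t).sub_const (n * τ)).fun_pow 2).const_mul (-a)).div_const 2
      |>.congr_deriv ?_
    ring
  exact (h.exp.const_mul (c ^ n / n.factorial)).congr_deriv (by rw [term]; ring)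

lemma succ_mul_term_succ (n : ℕ) (t : ℝ) :
    (n + 1 : ℕ) * term a τ c (n + 1) t = c * term a τ c n (t - τ) := by
  have hn : (n.factorial : ℝ) ≠ 0 := by positivity
  simp only [term, Nat.factorial_succ, pow_succ]
  push_cast
  rw [show t - (n + 1) * τ = t - τ - n * τ by ring]
  field_simp

variable {a}

lemma abs_term_le (ha : 0 ≤ a) (n : ℕ) (t : ℝ) : |term a τ c n t| ≤ |c| ^ n / n.factorial := by
  have hexp : exp (-a * (t - n * τ) ^ 2 / 2) ≤ 1 :=
    exp_le_one_iff.mpr (by nlinarith [sq_nonneg (t - n * τ)])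
  rw [term, abs_mul, abs_div, abs_pow, Nat.abs_cast, abs_of_pos (exp_pos _)]
  exact mul_le_of_le_one_right (by positivity) hexp

lemma norm_deriv_term_le (ha : 0 ≤ a) (n : ℕ) (t : ℝ) :
    ‖-a * (t - n * τ) * term a τ c n t‖ ≤ √a * (|c| ^ n / n.factorial) := by
  calc ‖-a * (t - n * τ) * term a τ c n t‖
      = |a * (t - n * τ)| * exp (-a * (t - n * τ) ^ 2 / 2) * (|c| ^ n / n.factorial) := by
        simp only [term, Real.norm_eq_abs, abs_mul, abs_neg, abs_div, abs_pow, Nat.abs_cast,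
          abs_of_pos (exp_pos _)]
        ring
    _ ≤ √a * (|c| ^ n / n.factorial) := by
        gcongr
        exact abs_mul_mul_exp_neg_mul_sq_div_two_le_sqrt ha _

lemma summable_term (ha : 0 ≤ a) (t : ℝ) : Summable (term a τ c · t) :=
  .of_norm_bounded (summable_pow_div_factorial |c|) (abs_term_le τ c ha · t)

lemma hasSum_natCast_mul_term (ha : 0 ≤ a) (t : ℝ) :
    HasSum (fun n : ℕ ↦ n * term a τ c n t) (c * ∑' n, term a τ c n (t - τ)) := by
  have hshift : HasSum (fun n : ℕ ↦ (n + 1 : ℕ) * term a τ c (n + 1) t)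
      (c * ∑' n, term a τ c n (t - τ)) := by
    simp only [succ_mul_term_succ]
    exact (summable_term τ c ha (t - τ)).hasSum.mul_left c
  simpa using (hasSum_nat_add_iff (f := fun n : ℕ ↦ n * term a τ c n t) 1).mp hshift

theorem hasDerivAt_tsum_term (ha : 0 ≤ a) (t : ℝ) :
    HasDerivAt (fun s ↦ ∑' n, term a τ c n s)
      (a * τ * c * ∑' n, term a τ c n (t - τ) - a * t * ∑' n, term a τ c n t) t := by
  refine (hasDerivAt_tsum ((summable_pow_div_factorial |c|).mul_left √a) (hasDerivAt_term a τ c)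
    (norm_deriv_term_le τ c ha) (summable_term τ c ha 0) t).congr_deriv ?_
  have h : HasSum (fun n : ℕ ↦ -a * (t - n * τ) * term a τ c n t)
      (a * τ * (c * ∑' n, term a τ c n (t - τ)) - a * t * ∑' n, term a τ c n t) :=
    (((hasSum_natCast_mul_term τ c ha t).mul_left (a * τ)).sub
      ((summable_term τ c ha t).hasSum.mul_left (a * t))).congr_fun fun n ↦ by ring
  rw [h.tsum_eq]
  ring

end GaussianChain

theorem stmt_0 (a b τ C : ℝ) (ha : 0 < a) (hτ : τ ≠ 0) (X : ℝ → ℝ)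
    (hX : ∀ t : ℝ, X t =
      C * ∑' n : ℕ, (1 / (n.factorial : ℝ)) * (b / (a * τ)) ^ n *
        Real.exp (-a * (t - n * τ) ^ 2 / 2)) :
    ∀ t : ℝ, deriv X t + a * t * X t = b * X (t - τ) := by
  intro t
  have hXS : X = fun s ↦ C * ∑' n, GaussianChain.term a τ (b / (a * τ)) n s := by
    ext s; simp only [hX, GaussianChain.term, one_div_mul_eq_div]
  have hb : a * τ * (b / (a * τ)) = b := mul_div_cancel₀ b (mul_ne_zero ha.ne' hτ)
  rw [hXS, ((GaussianChain.hasDerivAt_tsum_term τ _ ha.le t).const_mul C).deriv, hb]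
  ring
end

section
/- Let α, β ∈ ℝ and let f : ℝ → ℝ be a smooth (C^∞) function satisfying f'(x) = β f(α x) for all x ∈ ℝ. Then for every n ≥ 1 and all x ∈ ℝ, the n-th derivative satisfies f^{(n)}(x) = α^{n(n-1)/2} β^n f(α^n x); in particular f^{(n)}(0) = α^{n(n-1)/2} β^n f(0). -/
private lemma tri_succ (n : ℕ) : (n + 1) * n / 2 = n * (n - 1) / 2 + n := by
  have h : (n + 1) * n = n * (n - 1) + n * 2 := by
    cases n with
    | zero => simp
    | succ m => simp only [Nat.succ_sub_one]; ring
  rw [h, Nat.add_mul_div_right _ _ (by norm_num : 0 < 2)]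

theorem stmt_3 (α β : ℝ) (f : ℝ → ℝ) (hf : ContDiff ℝ (⊤ : ℕ∞) f)
    (heq : ∀ x : ℝ, deriv f x = β * f (α * x)) :
    ∀ n : ℕ, 1 ≤ n → (∀ x : ℝ,
      iteratedDeriv n f x = α ^ (n * (n - 1) / 2) * β ^ n * f (α ^ n * x)) ∧
      iteratedDeriv n f 0 = α ^ (n * (n - 1) / 2) * β ^ n * f 0 := by
  have hdiff := hf.differentiable (by simp)
  have key : ∀ n : ℕ, 1 ≤ n → ∀ x : ℝ,
      iteratedDeriv n f x = α ^ (n * (n - 1) / 2) * β ^ n * f (α ^ n * x) := by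
    intro n hn
    induction n, hn using Nat.le_induction with
    | base =>
      intro x
      simp [iteratedDeriv_one, heq x]
    | succ n hn ih =>
      intro x
      have hfun : iteratedDeriv n f =
          fun y => α ^ (n * (n - 1) / 2) * β ^ n * f (α ^ n * y) := funext ih
      rw [iteratedDeriv_succ, hfun]
      have h1 : HasDerivAt (fun y : ℝ => α ^ n * y) (α ^ n) x := by
        simpa using (hasDerivAt_id x).const_mul (α ^ n)
      have h2 : HasDerivAt f (deriv f (α ^ n * x)) (α ^ n * x) :=
        (hdiff (α ^ n * x)).hasDerivAt
      have h3 := ((h2.comp x h1).const_mul (α ^ (n * (n - 1) / 2) * β ^ n)).deriv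
      simp only [Function.comp] at h3
      rw [h3, heq]
      have he : (n + 1) * (n + 1 - 1) / 2 = n * (n - 1) / 2 + n := by
        simpa using tri_succ n
      rw [he]
      have : α * (α ^ n * x) = α ^ (n + 1) * x := by ring
      rw [this]
      ring
  intro n hn
  exact ⟨key n hn, by simpa using key n hn 0⟩
end

section
/- Let a > 0, τ ≠ 0 and define f(x) = C Σ_{n=0}^∞ (1/n!) (b/(aτ))^n (e^{-aτ²/2})^{n²} x^n. Then f satisfies f'(x) = β f(α x) for all x ∈ ℝ, where α = e^{-aτ²} and β = (b/(aτ)) e^{-aτ²/2}. -/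
/-!
With `k = b / (aτ)` and `q = exp (-aτ²/2)`, the coefficients `cₙ = C kⁿ q^(n²) / n!` satisfy
`(n + 1) c_{n+1} = k q (q²)ⁿ cₙ` because `(n + 1)² = n² + 2n + 1`; read coefficientwise, this is
exactly `f' x = k q · f (q² x)`. Since `|q| ≤ 1` we have `|cₙ| ≤ |C| |k|ⁿ / n!`, so the series
converges for every `x` and can be differentiated term by term.
-/

open Nat

lemma natCast_mul_pow_pred_le {t R : ℝ} (ht : 0 ≤ t) (htR : t ≤ R) (hR : 1 ≤ R) (n : ℕ) :
    (n : ℝ) * t ^ (n - 1) ≤ (2 * R) ^ n := by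
  have hn : (n : ℝ) ≤ 2 ^ n := by exact_mod_cast n.lt_two_pow_self.le
  have ht' : t ^ (n - 1) ≤ R ^ n :=
    (pow_le_pow_left₀ ht htR _).trans (pow_le_pow_right₀ hR (n.sub_le 1))
  rw [mul_pow]
  exact mul_le_mul hn ht' (by positivity) (by positivity)

theorem hasDerivAt_tsum_mul_pow {c : ℕ → ℝ} (hc : ∀ r, Summable fun n => c n * r ^ n) (x : ℝ) :
    HasDerivAt (fun y => ∑' n, c n * y ^ n) (∑' n, (n + 1) * c (n + 1) * x ^ n) x := by
  set R := |x| + 1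
  have hxR : x ∈ Metric.ball (0 : ℝ) R := by simp [R]
  have hbound : ∀ n, ∀ y ∈ Metric.ball (0 : ℝ) R,
      ‖c n * (n * y ^ (n - 1))‖ ≤ ‖c n * (2 * R) ^ n‖ := by
    intro n y hy
    have hR : 1 ≤ R := by simp [R]
    rw [norm_mul, norm_mul, norm_mul, norm_pow, norm_pow, Real.norm_natCast,
      Real.norm_of_nonneg (by linarith : (0 : ℝ) ≤ 2 * R)]
    exact mul_le_mul_of_nonneg_left
      (natCast_mul_pow_pred_le (norm_nonneg y) (mem_ball_zero_iff.mp hy).le hR n)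
      (norm_nonneg _)
  have hderiv := hasDerivAt_tsum_of_isPreconnected (hc (2 * R)).norm Metric.isOpen_ball
    (convex_ball 0 R).isPreconnected (fun n y _ => (hasDerivAt_pow n y).const_mul (c n)) hbound
    hxR (hc x) hxR
  have hsum : Summable fun n => c n * (n * x ^ (n - 1)) :=
    (hc (2 * R)).norm.of_norm_bounded fun n => hbound n x hxR
  rw [hsum.tsum_eq_zero_add] at hderiv
  refine hderiv.congr_deriv ?_
  simp only [CharP.cast_eq_zero, zero_mul, mul_zero, zero_add, push_cast, add_tsub_cancel_right]
  congr 1 with n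
  ring

theorem hasDerivAt_tsum_mul_pow_of_coeff_succ {c : ℕ → ℝ}
    (hc : ∀ r, Summable fun n => c n * r ^ n) {α β : ℝ}
    (hrec : ∀ n : ℕ, (n + 1) * c (n + 1) = β * α ^ n * c n) (x : ℝ) :
    HasDerivAt (fun y => ∑' n, c n * y ^ n) (β * ∑' n, c n * (α * x) ^ n) x := by
  convert hasDerivAt_tsum_mul_pow hc x using 1
  rw [← tsum_mul_left]
  congr 1 with n
  rw [hrec, mul_pow]
  ring

noncomputable def pantographCoeff (C k q : ℝ) (n : ℕ) : ℝ := C * (1 / n ! * k ^ n * q ^ (n ^ 2))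

lemma pantographCoeff_succ (C k q : ℝ) (n : ℕ) :
    (n + 1) * pantographCoeff C k q (n + 1) = k * q * (q ^ 2) ^ n * pantographCoeff C k q n := by
  rw [pantographCoeff, pantographCoeff, factorial_succ,
    show (n + 1) ^ 2 = n ^ 2 + 2 * n + 1 by ring]
  push_cast
  field_simp
  ring

lemma summable_pantographCoeff_mul_pow (C k : ℝ) {q : ℝ} (hq : |q| ≤ 1) (r : ℝ) :
    Summable fun n => pantographCoeff C k q n * r ^ n := by
  refine ((Real.summable_pow_div_factorial (|k| * |r|)).mul_left |C|).of_norm_bounded fun n => ?_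
  have hqn : |q| ^ (n ^ 2) ≤ 1 := pow_le_one₀ (abs_nonneg q) hq
  simp only [pantographCoeff, norm_mul, norm_pow, norm_div, norm_one, Real.norm_eq_abs,
    Nat.abs_cast, mul_pow]
  calc |C| * (1 / n ! * |k| ^ n * |q| ^ (n ^ 2)) * |r| ^ n
      ≤ |C| * (1 / n ! * |k| ^ n * 1) * |r| ^ n := by gcongr
    _ = |C| * (|k| ^ n * |r| ^ n / n !) := by ring

theorem stmt_4_general (a b τ C α β : ℝ) (ha : 0 < a)
    (hα : α = Real.exp (-a * τ ^ 2)) (hβ : β = b / (a * τ) * Real.exp (-a * τ ^ 2 / 2))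
    (f : ℝ → ℝ)
    (hf : ∀ x : ℝ, f x =
      C * ∑' n : ℕ, (1 / (n.factorial : ℝ)) * (b / (a * τ)) ^ n *
        (Real.exp (-a * τ ^ 2 / 2)) ^ (n ^ 2) * x ^ n) :
    ∀ x : ℝ, deriv f x = β * f (α * x) := by
  set q := Real.exp (-a * τ ^ 2 / 2)
  have hq : |q| ≤ 1 := by
    rw [abs_of_pos (Real.exp_pos _), Real.exp_le_one_iff]
    have : 0 ≤ a * τ ^ 2 := by positivity
    linarith
  have hαq : α = q ^ 2 := by rw [hα, ← Real.exp_nat_mul]; ring_nf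
  have hf' : f = fun y => ∑' n, pantographCoeff C (b / (a * τ)) q n * y ^ n := by
    ext y
    rw [hf, ← tsum_mul_left]
    simp only [pantographCoeff, mul_assoc]
  intro x
  rw [hf', hαq, hβ]
  exact (hasDerivAt_tsum_mul_pow_of_coeff_succ (summable_pantographCoeff_mul_pow C _ hq)
    (pantographCoeff_succ C _ q) x).deriv

theorem stmt_4 (a b τ C α β : ℝ) (ha : 0 < a) (hτ : τ ≠ 0)
    (hα : α = Real.exp (-a * τ ^ 2)) (hβ : β = b / (a * τ) * Real.exp (-a * τ ^ 2 / 2))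
    (f : ℝ → ℝ)
    (hf : ∀ x : ℝ, f x =
      C * ∑' n : ℕ, (1 / (n.factorial : ℝ)) * (b / (a * τ)) ^ n *
        (Real.exp (-a * τ ^ 2 / 2)) ^ (n ^ 2) * x ^ n) :
    ∀ x : ℝ, deriv f x = β * f (α * x) :=
  stmt_4_general a b τ C α β ha hα hβ f hf
end

section
/- Let a > 0, τ ≠ 0, and X(t) = C Σ_{n=0}^∞ (1/n!)(b/(aτ))^n e^{-a(t-nτ)²/2}. Then X(t) → 0 as t → -∞ when τ > 0 (and as t → +∞ when τ < 0); more precisely, X(t) = e^{-at²/2} f(e^{aτt}) with f continuous, so |X(t)| ≤ e^{-at²/2} · sup_{0 ≤ x ≤ 1} |f(x)| for aτ t ≤ 0. -/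
open Filter

theorem stmt_12 (a b τ C : ℝ) (ha : 0 < a) (hτ : τ ≠ 0)
    (f : ℝ → ℝ)
    (hf : ∀ x : ℝ, f x =
      C * ∑' n : ℕ, (1 / (n.factorial : ℝ)) * (b / (a * τ)) ^ n *
        (Real.exp (-a * τ ^ 2 / 2)) ^ (n ^ 2) * x ^ n)
    (X : ℝ → ℝ)
    (hX : ∀ t : ℝ, X t =
      C * ∑' n : ℕ, (1 / (n.factorial : ℝ)) * (b / (a * τ)) ^ n *
        Real.exp (-a * (t - n * τ) ^ 2 / 2)) :
    (∀ t : ℝ, X t = Real.exp (-a * t ^ 2 / 2) * f (Real.exp (a * τ * t))) ∧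
    (0 < τ → Tendsto X atBot (nhds 0)) ∧
    (τ < 0 → Tendsto X atTop (nhds 0)) := by
  -- Part 1 : identity
  have key : ∀ t : ℝ, ∀ n : ℕ,
      (1 / (n.factorial : ℝ)) * (b / (a * τ)) ^ n *
        Real.exp (-a * (t - n * τ) ^ 2 / 2)
      = Real.exp (-a * t ^ 2 / 2) *
        ((1 / (n.factorial : ℝ)) * (b / (a * τ)) ^ n *
          (Real.exp (-a * τ ^ 2 / 2)) ^ (n ^ 2) * (Real.exp (a * τ * t)) ^ n) := by
    intro t n
    rw [← Real.exp_nat_mul, ← Real.exp_nat_mul]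
    rw [show Real.exp (-a * t ^ 2 / 2) *
        (1 / (n.factorial : ℝ) * (b / (a * τ)) ^ n * Real.exp (↑(n ^ 2) * (-a * τ ^ 2 / 2)) *
          Real.exp (↑n * (a * τ * t)))
      = 1 / (n.factorial : ℝ) * (b / (a * τ)) ^ n *
        (Real.exp (-a * t ^ 2 / 2) * Real.exp (↑(n ^ 2) * (-a * τ ^ 2 / 2)) *
          Real.exp (↑n * (a * τ * t))) from by ring]
    rw [← Real.exp_add, ← Real.exp_add]
    congr 2
    push_cast
    ring
  have h1 : ∀ t : ℝ, X t = Real.exp (-a * t ^ 2 / 2) * f (Real.exp (a * τ * t)) := by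
    intro t
    rw [hX t, hf, tsum_congr (key t), tsum_mul_left]
    ring
  -- bound on f on [-1, 1]
  have hq1 : Real.exp (-a * τ ^ 2 / 2) ≤ 1 := by
    rw [Real.exp_le_one_iff]
    nlinarith [sq_nonneg τ]
  set r : ℝ := |b / (a * τ)| with hr
  have hsum : Summable (fun n : ℕ => r ^ n / n.factorial) :=
    Real.summable_pow_div_factorial r
  set M : ℝ := |C| * ∑' n : ℕ, r ^ n / n.factorial with hM
  have hfb : ∀ x : ℝ, |x| ≤ 1 → |f x| ≤ M := by
    intro x hx
    rw [hf, abs_mul]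
    refine mul_le_mul_of_nonneg_left ?_ (abs_nonneg C)
    rw [← Real.norm_eq_abs]
    refine tsum_of_norm_bounded hsum.hasSum ?_
    intro n
    rw [Real.norm_eq_abs, abs_mul, abs_mul, abs_mul, abs_pow, abs_pow, abs_pow]
    have h0 : |Real.exp (-a * τ ^ 2 / 2)| = Real.exp (-a * τ ^ 2 / 2) :=
      abs_of_pos (Real.exp_pos _)
    rw [h0]
    have hfac : |1 / (n.factorial : ℝ)| = 1 / n.factorial := by
      rw [abs_of_pos]
      positivity
    rw [hfac]
    have e1 : (Real.exp (-a * τ ^ 2 / 2)) ^ (n ^ 2) ≤ 1 :=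
      pow_le_one₀ (Real.exp_pos _).le hq1
    have e2 : |x| ^ n ≤ 1 := pow_le_one₀ (abs_nonneg x) hx
    calc 1 / (n.factorial : ℝ) * |b / (a * τ)| ^ n * (Real.exp (-a * τ ^ 2 / 2)) ^ (n ^ 2) * |x| ^ n
        ≤ 1 / (n.factorial : ℝ) * |b / (a * τ)| ^ n * 1 * 1 := by
          gcongr <;> positivity
      _ = r ^ n / n.factorial := by rw [hr]; ring
  -- decay lemma
  have hdecay : ∀ (l : Filter ℝ), Tendsto (fun t : ℝ => t ^ 2) l atTop →
      Tendsto (fun t : ℝ => M * Real.exp (-a * t ^ 2 / 2)) l (nhds 0) := by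
    intro l hl
    have h2 : Tendsto (fun t : ℝ => -a * t ^ 2 / 2) l atBot := by
      have := hl.const_mul_atTop_of_neg (r := -a / 2) (by linarith)
      refine this.congr fun t => by ring
    have h3 : Tendsto (fun t : ℝ => Real.exp (-a * t ^ 2 / 2)) l (nhds 0) :=
      Real.tendsto_exp_atBot.comp h2
    simpa using h3.const_mul M
  have hsq : ∀ (l : Filter ℝ), Tendsto (fun t : ℝ => t ^ 2) l atTop →
      (∀ᶠ t in l, a * τ * t ≤ 0) → Tendsto X l (nhds 0) := by
    intro l hl hev
    apply squeeze_zero_norm' (a := fun t => M * Real.exp (-a * t ^ 2 / 2))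
    · filter_upwards [hev] with t ht
      rw [h1 t, Real.norm_eq_abs, abs_mul, abs_of_pos (Real.exp_pos _), mul_comm]
      refine mul_le_mul_of_nonneg_right ?_ (Real.exp_pos _).le
      refine hfb _ ?_
      rw [abs_of_pos (Real.exp_pos _), Real.exp_le_one_iff]
      exact ht
    · exact hdecay l hl
  refine ⟨h1, ?_, ?_⟩
  · intro hτp
    refine hsq atBot ?_ ?_
    · have : Tendsto (fun t : ℝ => (-t) ^ 2) atBot atTop :=
        (tendsto_pow_atTop two_ne_zero).comp tendsto_neg_atBot_atTop
      exact this.congr fun t => by ring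
    · filter_upwards [eventually_le_atBot (0 : ℝ)] with t ht
      have : 0 < a * τ := mul_pos ha hτp
      nlinarith
  · intro hτn
    refine hsq atTop ?_ ?_
    · exact tendsto_pow_atTop two_ne_zero
    · filter_upwards [eventually_ge_atTop (0 : ℝ)] with t ht
      have : a * τ < 0 := mul_neg_of_pos_of_neg ha hτn
      nlinarith
end

section
/- If a > 0, b ∈ ℝ, τ ∈ ℝ and X : ℝ → ℝ is a differentiable solution of X'(t) + a t X(t) = b X(t - τ) that is bounded on ℝ, then X(t) → 0 as |t| → ∞. In particular, the solution e^{-at²/2} with b = 0 converges to 0 at ±∞. -/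
/-!
The Gaussian integrating factor `exp (a t² / 2)` turns `X' + a t X = F` into
`(exp (a t² / 2) X)' = exp (a t² / 2) F`. Integrating over `[0, t]` and comparing `exp (a s² / 2)`
with `exp (a t s / 2)` gives, for `t > 0` and `|F| ≤ K`,
`|X t| ≤ exp (-a t² / 2) |X 0| + 2 K / (a t)`, which tends to `0`. The delay term `b X (t - τ)` is
such a bounded continuous forcing, and `t ↦ X (-t)` solves an equation of the same shape, which
handles `t → -∞`.
-/

open Filter Real Topology

theorem integral_exp_mul_sq_le {c t : ℝ} (hc : 0 < c) (ht : 0 < t) :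
    ∫ s in (0 : ℝ)..t, exp (c * s ^ 2) ≤ exp (c * t ^ 2) / (c * t) := by
  have hexp_lin : ∫ s in (0 : ℝ)..t, exp (c * t * s) = (exp (c * t ^ 2) - 1) / (c * t) := by
    rw [intervalIntegral.integral_comp_mul_left exp (by positivity), integral_exp]
    simp [div_eq_inv_mul, sq, mul_assoc]
  calc ∫ s in (0 : ℝ)..t, exp (c * s ^ 2)
      ≤ ∫ s in (0 : ℝ)..t, exp (c * t * s) := by
        refine intervalIntegral.integral_mono_on ht.le
          ((by fun_prop : Continuous fun s => exp (c * s ^ 2)).intervalIntegrable 0 t)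
          ((by fun_prop : Continuous fun s => exp (c * t * s)).intervalIntegrable 0 t)
          fun s hs => exp_le_exp.2 ?_
        nlinarith [mul_nonneg (mul_nonneg hc.le hs.1) (sub_nonneg.2 hs.2)]
    _ = (exp (c * t ^ 2) - 1) / (c * t) := hexp_lin
    _ ≤ exp (c * t ^ 2) / (c * t) := by gcongr; linarith

section GaussianDamping

variable {a K : ℝ} {X F : ℝ → ℝ}

theorem abs_le_of_hasDerivAt_eq_sub_mul_self (ha : 0 < a) (hF : Continuous F)
    (hFK : ∀ t, |F t| ≤ K) (hX : ∀ t, HasDerivAt X (F t - a * t * X t) t) {t : ℝ} (ht : 0 < t) :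
    |X t| ≤ exp (-(a / 2 * t ^ 2)) * |X 0| + K / (a / 2 * t) := by
  have hY : ∀ s, HasDerivAt (fun s => exp (a / 2 * s ^ 2) * X s) (exp (a / 2 * s ^ 2) * F s) s := by
    intro s
    have hw : HasDerivAt (fun s => exp (a / 2 * s ^ 2)) (exp (a / 2 * s ^ 2) * (a * s)) s :=
      ((hasDerivAt_pow 2 s).const_mul (a / 2)).exp.congr_deriv (by push_cast; ring)
    exact (hw.mul (hX s)).congr_deriv (by ring)
  have hFTC : exp (a / 2 * t ^ 2) * X t - X 0 = ∫ s in (0 : ℝ)..t, exp (a / 2 * s ^ 2) * F s := by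
    rw [intervalIntegral.integral_eq_sub_of_hasDerivAt (fun s _ => hY s)
      ((by fun_prop : Continuous fun s => exp (a / 2 * s ^ 2) * F s).intervalIntegrable 0 t)]
    simp
  have hint : |∫ s in (0 : ℝ)..t, exp (a / 2 * s ^ 2) * F s| ≤
      K * (exp (a / 2 * t ^ 2) / (a / 2 * t)) :=
    calc |∫ s in (0 : ℝ)..t, exp (a / 2 * s ^ 2) * F s|
        ≤ ∫ s in (0 : ℝ)..t, K * exp (a / 2 * s ^ 2) := by
          rw [← Real.norm_eq_abs]
          refine intervalIntegral.norm_integral_le_of_norm_le ht.le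
            (Eventually.of_forall fun s _ => ?_)
            ((by fun_prop : Continuous fun s => K * exp (a / 2 * s ^ 2)).intervalIntegrable 0 t)
          rw [Real.norm_eq_abs, abs_mul, abs_of_pos (exp_pos _), mul_comm]
          exact mul_le_mul_of_nonneg_right (hFK s) (exp_pos _).le
      _ ≤ K * (exp (a / 2 * t ^ 2) / (a / 2 * t)) := by
          rw [intervalIntegral.integral_const_mul]
          exact mul_le_mul_of_nonneg_left (integral_exp_mul_sq_le (by positivity) ht)
            ((abs_nonneg _).trans (hFK 0))
  calc |X t| = exp (-(a / 2 * t ^ 2)) * |exp (a / 2 * t ^ 2) * X t| := by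
        rw [abs_mul, abs_of_pos (exp_pos _), ← mul_assoc, ← exp_add, neg_add_cancel, exp_zero,
          one_mul]
    _ ≤ exp (-(a / 2 * t ^ 2)) * (|X 0| + K * (exp (a / 2 * t ^ 2) / (a / 2 * t))) := by
        gcongr
        calc |exp (a / 2 * t ^ 2) * X t| ≤ |X 0| + |exp (a / 2 * t ^ 2) * X t - X 0| := by
              simpa using abs_add_le (X 0) (exp (a / 2 * t ^ 2) * X t - X 0)
          _ ≤ _ := by rw [hFTC]; gcongr
    _ = exp (-(a / 2 * t ^ 2)) * |X 0| + K / (a / 2 * t) := by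
        rw [mul_add, exp_neg]; field_simp

theorem tendsto_atTop_of_hasDerivAt_eq_sub_mul_self (ha : 0 < a) (hF : Continuous F)
    (hFK : ∀ t, |F t| ≤ K) (hX : ∀ t, HasDerivAt X (F t - a * t * X t) t) :
    Tendsto X atTop (𝓝 0) := by
  have hsq : Tendsto (fun t : ℝ => a / 2 * t ^ 2) atTop atTop :=
    (tendsto_pow_atTop two_ne_zero).const_mul_atTop (by positivity)
  have hlin : Tendsto (fun t : ℝ => a / 2 * t) atTop atTop :=
    tendsto_id.const_mul_atTop (by positivity)
  refine squeeze_zero_norm' ?_ (by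
    simpa using ((tendsto_exp_neg_atTop_nhds_zero.comp hsq).mul_const |X 0|).add
      ((tendsto_const_nhds (x := K)).div_atTop hlin))
  filter_upwards [eventually_gt_atTop 0] with t ht
  exact abs_le_of_hasDerivAt_eq_sub_mul_self ha hF hFK hX ht

theorem tendsto_atBot_of_hasDerivAt_eq_sub_mul_self (ha : 0 < a) (hF : Continuous F)
    (hFK : ∀ t, |F t| ≤ K) (hX : ∀ t, HasDerivAt X (F t - a * t * X t) t) :
    Tendsto X atBot (𝓝 0) := by
  have hXneg : ∀ t, HasDerivAt (fun t => X (-t)) (-F (-t) - a * t * X (-t)) t := fun t =>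
    ((hX (-t)).comp t (hasDerivAt_neg' t)).congr_deriv (by ring)
  have hFneg : ∀ t, |-F (-t)| ≤ K := fun t => by simpa using hFK (-t)
  simpa [Function.comp_def] using
    (tendsto_atTop_of_hasDerivAt_eq_sub_mul_self ha (by fun_prop) hFneg hXneg).comp
      tendsto_neg_atBot_atTop

end GaussianDamping

theorem stmt_13 (a b τ : ℝ) (ha : 0 < a) (X : ℝ → ℝ)
    (hdiff : Differentiable ℝ X)
    (hDDE : ∀ t : ℝ, deriv X t + a * t * X t = b * X (t - τ))
    (hbdd : ∃ M : ℝ, ∀ t : ℝ, |X t| ≤ M) :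
    Tendsto X atTop (nhds 0) ∧ Tendsto X atBot (nhds 0) := by
  obtain ⟨M, hM⟩ := hbdd
  have hX : ∀ t, HasDerivAt X (b * X (t - τ) - a * t * X t) t := fun t => by
    rw [← hDDE t, add_sub_cancel_right]; exact (hdiff t).hasDerivAt
  have hF : Continuous fun t => b * X (t - τ) := by have := hdiff.continuous; fun_prop
  have hFM : ∀ t, |b * X (t - τ)| ≤ |b| * M := fun t => by
    rw [abs_mul]; exact mul_le_mul_of_nonneg_left (hM _) (abs_nonneg b)
  exact ⟨tendsto_atTop_of_hasDerivAt_eq_sub_mul_self ha hF hFM hX,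
    tendsto_atBot_of_hasDerivAt_eq_sub_mul_self ha hF hFM hX⟩
end

section
/- For a > 0 fixed, b ≠ 0, the single-Gaussian function X_τ(t) = C e^{-at²/2} is the pointwise limit as |τ| → ∞ of the series solutions X(t;τ) = C Σ_{n=0}^∞ (1/n!)(b/(aτ))^n e^{-a(t-nτ)²/2}: for each fixed t ∈ ℝ, lim_{|τ|→∞} X(t;τ) = C e^{-at²/2}. -/
/-!
Every term of the series with `n ≥ 1` is dominated by the corresponding term `|x|ⁿ / n!` of the
exponential series at `x = b / (aτ)`, because the Gaussian factor is at most `1`. Hence the series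
differs from its `n = 0` term `exp (-a t² / 2)` by at most `exp |x| - 1`, which tends to `0` as
`|τ| → ∞`.
-/

open Filter Topology

theorem abs_tsum_sub_zero_le_exp_sub_one {f : ℕ → ℝ} {x : ℝ}
    (hf : ∀ n, |f n| ≤ |x| ^ n / n.factorial) :
    |∑' n, f n - f 0| ≤ Real.exp |x| - 1 := by
  have hexp : HasSum (fun n => |x| ^ n / n.factorial) (Real.exp |x|) := by
    rw [Real.exp_eq_exp_ℝ]
    exact NormedSpace.expSeries_div_hasSum_exp |x|
  have htail : HasSum (fun n => |x| ^ (n + 1) / (n + 1).factorial) (Real.exp |x| - 1) := by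
    simpa using (hasSum_nat_add_iff' 1).mpr hexp
  have hsum : Summable f := .of_norm_bounded hexp.summable hf
  rw [hsum.tsum_eq_zero_add, add_sub_cancel_left]
  exact tsum_of_norm_bounded htail fun n => (Real.norm_eq_abs _).trans_le (hf (n + 1))

theorem tendsto_tsum_of_abs_le_pow_div_factorial {ι : Type*} {l : Filter ι} {f : ι → ℕ → ℝ}
    {x : ι → ℝ} {c : ℝ} (hx : Tendsto x l (𝓝 0))
    (hf : ∀ τ n, |f τ n| ≤ |x τ| ^ n / n.factorial) (hf₀ : ∀ τ, f τ 0 = c) :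
    Tendsto (fun τ => ∑' n, f τ n) l (𝓝 c) := by
  have hbound : Tendsto (fun τ => Real.exp |x τ| - 1) l (𝓝 0) := by
    simpa using ((Real.continuous_exp.comp continuous_abs).tendsto 0).comp hx |>.sub_const 1
  have hdiff : Tendsto (fun τ => ∑' n, f τ n - c) l (𝓝 0) :=
    squeeze_zero_norm (fun τ => hf₀ τ ▸ abs_tsum_sub_zero_le_exp_sub_one (hf τ)) hbound
  simpa using hdiff.add_const c

theorem abs_inv_factorial_mul_pow_mul_exp_le {a : ℝ} (ha : 0 ≤ a) (x s : ℝ) (n : ℕ) :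
    |1 / (n.factorial : ℝ) * x ^ n * Real.exp (-a * s ^ 2 / 2)| ≤ |x| ^ n / n.factorial := by
  have hgauss : Real.exp (-a * s ^ 2 / 2) ≤ 1 :=
    Real.exp_le_one_iff.mpr (by nlinarith [mul_nonneg ha (sq_nonneg s)])
  rw [abs_mul, abs_mul, abs_pow, abs_of_pos (Real.exp_pos _), abs_of_pos (by positivity)]
  calc 1 / (n.factorial : ℝ) * |x| ^ n * Real.exp (-a * s ^ 2 / 2)
      ≤ 1 / (n.factorial : ℝ) * |x| ^ n * 1 := by gcongr
    _ = |x| ^ n / n.factorial := by ring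

theorem tendsto_gaussian_series {ι : Type*} {l : Filter ι} {a b : ℝ} (ha : 0 ≤ a) (C t : ℝ)
    {τ : ι → ℝ} (hτ : Tendsto (fun i => b / (a * τ i)) l (𝓝 0)) :
    Tendsto (fun i => C * ∑' n : ℕ, (1 / (n.factorial : ℝ)) * (b / (a * τ i)) ^ n *
      Real.exp (-a * (t - n * τ i) ^ 2 / 2)) l (𝓝 (C * Real.exp (-a * t ^ 2 / 2))) :=
  (tendsto_tsum_of_abs_le_pow_div_factorial hτ
    (fun i n => abs_inv_factorial_mul_pow_mul_exp_le ha _ _ n) (fun i => by simp)).const_mul C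

theorem stmt_15_general (a b C : ℝ) (ha : 0 < a) :
    ∀ t : ℝ,
      Tendsto (fun τ : ℝ =>
        C * ∑' n : ℕ, (1 / (n.factorial : ℝ)) * (b / (a * τ)) ^ n *
          Real.exp (-a * (t - n * τ) ^ 2 / 2)) atTop
        (nhds (C * Real.exp (-a * t ^ 2 / 2))) ∧
      Tendsto (fun τ : ℝ =>
        C * ∑' n : ℕ, (1 / (n.factorial : ℝ)) * (b / (a * τ)) ^ n *
          Real.exp (-a * (t - n * τ) ^ 2 / 2)) atBot
        (nhds (C * Real.exp (-a * t ^ 2 / 2))) := by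
  intro t
  exact ⟨tendsto_gaussian_series ha.le C t
      (tendsto_const_nhds.div_atTop (tendsto_id.const_mul_atTop ha)),
    tendsto_gaussian_series ha.le C t
      (tendsto_const_nhds.div_atBot (tendsto_id.const_mul_atBot ha))⟩

theorem stmt_15 (a b C : ℝ) (ha : 0 < a) (hb : b ≠ 0) :
    ∀ t : ℝ,
      Tendsto (fun τ : ℝ =>
        C * ∑' n : ℕ, (1 / (n.factorial : ℝ)) * (b / (a * τ)) ^ n *
          Real.exp (-a * (t - n * τ) ^ 2 / 2)) atTop
        (nhds (C * Real.exp (-a * t ^ 2 / 2))) ∧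
      Tendsto (fun τ : ℝ =>
        C * ∑' n : ℕ, (1 / (n.factorial : ℝ)) * (b / (a * τ)) ^ n *
          Real.exp (-a * (t - n * τ) ^ 2 / 2)) atBot
        (nhds (C * Real.exp (-a * t ^ 2 / 2))) :=
  stmt_15_general a b C ha
end
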